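/- The representative z of the singular vertex has order exactly p; that is, |z| = p is prime. -/

import Mathlib

open MulAction

namespace Paper

variable (A G : Type*) [Group A] [Group G] [MulDistribMulAction A G]

/-- The vertex set of the commuting graph of `A`-orbits: the `A`-orbits of
nonidentity elements of `G`, realized as nontrivial classes in the orbit quotient. -/
def Vertex :=
  {o : Quotient (MulAction.orbitRel A G) // o ≠ Quotient.mk (MulAction.orbitRel A G) (1 : G)}

/-- The commuting graph `Γ(G,A)` of `A`-orbits: two distinct orbits are adjacent
iff they contain commuting representatives. -/
def commGraph : SimpleGraph (Vertex A G) where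
  Adj u v := u ≠ v ∧ ∃ x y : G,
      Quotient.mk (MulAction.orbitRel A G) x = u.1 ∧
      Quotient.mk (MulAction.orbitRel A G) y = v.1 ∧ Commute x y
  symm := by
    refine ⟨?_⟩
    rintro u v ⟨h, x, y, hx, hy, hc⟩
    exact ⟨h.symm, y, x, hy, hx, hc.symm⟩
  loopless := ⟨fun u h => h.1 rfl⟩

/-- The vertex `x^A` determined by a nonidentity element `x` of `G`. -/
def vert (x : G) (hx : x ≠ 1) : Vertex A G :=
  ⟨Quotient.mk (MulAction.orbitRel A G) x, fun h => hx (by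
    obtain ⟨a, ha⟩ := MulAction.mem_orbit_iff.mp (Quotient.exact h)
    exact ha.symm.trans (smul_one a))⟩

/-- An `F`-graph: a connected graph with at most one vertex of degree at least three. -/
def IsFGraph {V : Type*} (Γ : SimpleGraph V) : Prop :=
  Γ.Connected ∧ ∀ u v : V, 3 ≤ (Γ.neighborSet u).ncard → 3 ≤ (Γ.neighborSet v).ncard → u = v

/-- A subgroup of `G` is `A`-invariant if it is stable under the action of `A`. -/
def AInv (H : Subgroup G) : Prop := ∀ (a : A), ∀ x ∈ H, a • x ∈ H

/-- An Eppo-group: every nontrivial element has prime power order. -/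
def IsEppo (H : Type*) [Group H] : Prop := ∀ x : H, x ≠ 1 → IsPrimePow (orderOf x)

/-- The `p`-core `O_p(G)`: the join of all normal `p`-subgroups of `G`
(i.e. the largest normal `p`-subgroup of a finite group `G`). -/
def pCore (p : ℕ) (G : Type*) [Group G] : Subgroup G :=
  ⨆ N : {N : Subgroup G // N.Normal ∧ IsPGroup p N}, (N : Subgroup G)

instance pCore_normal (p : ℕ) (G : Type*) [Group G] : (pCore p G).Normal := by
  constructor
  intro x hx g
  refine Subgroup.iSup_induction (C := fun y => g * y * g⁻¹ ∈ pCore p G) _ hx ?_ ?_ ?_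
  · rintro ⟨N, hN, hNp⟩ y hy
    exact Subgroup.mem_iSup_of_mem ⟨N, hN, hNp⟩ (hN.conj_mem y hy g)
  · simpa using (pCore p G).one_mem
  · intro a b ha hb
    have h : g * (a * b) * g⁻¹ = (g * a * g⁻¹) * (g * b * g⁻¹) := by group
    rw [h]; exact (pCore p G).mul_mem ha hb

/-- The Fitting subgroup `F(G)`: the join of all normal nilpotent subgroups of `G`
(i.e. the largest normal nilpotent subgroup of a finite group `G`). -/
def fitting (G : Type*) [Group G] : Subgroup G :=
  ⨆ N : {N : Subgroup G // N.Normal ∧ Group.IsNilpotent N}, (N : Subgroup G)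

instance fitting_normal (G : Type*) [Group G] : (fitting G).Normal := by
  constructor
  intro x hx g
  refine Subgroup.iSup_induction (C := fun y => g * y * g⁻¹ ∈ fitting G) _ hx ?_ ?_ ?_
  · rintro ⟨N, hN, hNn⟩ y hy
    exact Subgroup.mem_iSup_of_mem ⟨N, hN, hNn⟩ (hN.conj_mem y hy g)
  · simpa using (fitting G).one_mem
  · intro a b ha hb
    have h : g * (a * b) * g⁻¹ = (g * a * g⁻¹) * (g * b * g⁻¹) := by group
    rw [h]; exact (fitting G).mul_mem ha hb

end Paper

open Paper MulAction in
/-- Under the standing hypothesis (`|π(G)| ≥ 2`, `Γ(G,A)` an `F`-graph with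
singular vertex `z^A`, `p` a prime divisor of the order of `z`), the order of `z` is
exactly `p`. -/
theorem statement2 (G A : Type*) [Group G] [Finite G] [Group A] [Finite A]
    [MulDistribMulAction A G]
    (hπ : 2 ≤ (Nat.card G).primeFactors.card)
    (hF : IsFGraph (commGraph A G))
    (z : G) (hz1 : z ≠ 1)
    (hsing : 3 ≤ ((commGraph A G).neighborSet (vert A G z hz1)).ncard)
    (p : ℕ) (hp : p.Prime) (hpz : p ∣ orderOf z) :
    orderOf z = p := by
  have hfin : Finite (Vertex A G) := by
    unfold Paper.Vertex; exact Subtype.finite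
  have horder : ∀ (a : A) (x : G), orderOf (a • x) = orderOf x := fun a x =>
    orderOf_injective (MulDistribMulAction.toMonoidHom G a) (MulAction.injective a) x
  by_cases hw : z ^ p = 1
  · have hdvd : orderOf z ∣ p := orderOf_dvd_of_pow_eq_one hw
    rcases (Nat.Prime.eq_one_or_self_of_dvd hp _ hdvd) with h1 | h1
    · exact absurd (orderOf_eq_one_iff.mp h1) hz1
    · exact h1
  · exfalso
    have hw1 : z ^ p ≠ 1 := hw
    have hordw : orderOf (z ^ p) = orderOf z / p := by
      rw [orderOf_pow, Nat.gcd_eq_right hpz]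
    have hlt : orderOf z / p < orderOf z :=
      Nat.div_lt_self (orderOf_pos z) hp.one_lt
    have hne : vert A G (z ^ p) hw1 ≠ vert A G z hz1 := by
      intro h
      have h' : Quotient.mk (MulAction.orbitRel A G) (z ^ p) =
          Quotient.mk (MulAction.orbitRel A G) z := congrArg Subtype.val h
      obtain ⟨a, ha⟩ := MulAction.mem_orbit_iff.mp (Quotient.exact h')
      have : orderOf (z ^ p) = orderOf z := by rw [← ha, horder]
      omega
    set S := (commGraph A G).neighborSet (vert A G z hz1) with hS
    set T := (commGraph A G).neighborSet (vert A G (z ^ p) hw1) with hT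
    have hzT : vert A G z hz1 ∈ T := by
      show _ ∧ _; refine ⟨hne, z ^ p, z, rfl, rfl, (Commute.refl z).pow_left p⟩
    have hsub : insert (vert A G z hz1) (S \ {vert A G (z ^ p) hw1}) ⊆ T := by
      rintro u hu
      rcases hu with rfl | ⟨huS, hune⟩
      · exact hzT
      · obtain ⟨hne', x, y, hx, hy, hc⟩ := (huS : _ ∧ _)
        show _ ∧ _; refine ⟨fun h => hune (by simp [h.symm]), x ^ p, y, ?_, hy, hc.pow_left p⟩
        obtain ⟨a, ha⟩ := MulAction.mem_orbit_iff.mp (Quotient.exact hx)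
        exact Quotient.sound (MulAction.mem_orbit_iff.mpr
          ⟨a, by rw [smul_pow', ha]⟩)
    have hzS : vert A G z hz1 ∉ S \ {vert A G (z ^ p) hw1} := fun h =>
      (commGraph A G).irrefl h.1
    have h1 : (insert (vert A G z hz1) (S \ {vert A G (z ^ p) hw1})).ncard ≤ T.ncard :=
      Set.ncard_le_ncard hsub (Set.toFinite T)
    have h2 : (insert (vert A G z hz1) (S \ {vert A G (z ^ p) hw1})).ncard =
        (S \ {vert A G (z ^ p) hw1}).ncard + 1 :=
      Set.ncard_insert_of_notMem hzS (Set.toFinite _)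
    have h3 : S.ncard ≤ (S \ {vert A G (z ^ p) hw1}).ncard + 1 := by
      calc S.ncard ≤ (insert (vert A G (z ^ p) hw1) S).ncard :=
            Set.ncard_le_ncard (Set.subset_insert _ _) (Set.toFinite _)
        _ = (insert (vert A G (z ^ p) hw1) (S \ {vert A G (z ^ p) hw1})).ncard := by
            rw [Set.insert_diff_singleton]
        _ ≤ (S \ {vert A G (z ^ p) hw1}).ncard + 1 := Set.ncard_insert_le _ _
    have hT3 : 3 ≤ T.ncard := by omega
    exact hne (hF.2 _ _ hT3 hsing)
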